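/- arXiv:1909.11225 — 3 statements merged into one kernel-verified Lean document; each statement's English description precedes it below -/
import Mathlib

section
/- For 1 ≤ s ≤ n/10 and integers c ≥ 2, k ≥ 3, n ≥ 19, the ratio ((s/(n−s+1))·((n−s+1)/(n−s))^(c−2))^(k−1) is at most 1/8, where in addition c − 2 ≤ n − s. -/
/-- For integers `1 ≤ s ≤ n/10`, `c ≥ 2` with `c - 2 ≤ n - s`, `k ≥ 3`, `n ≥ 19`:
`((s/(n−s+1)) · ((n−s+1)/(n−s))^(c−2))^(k−1) ≤ 1/8`. -/
theorem stmt10 (s c k n : ℕ) (hs : 1 ≤ s) (hsn : 10 * s ≤ n)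
    (hc : 2 ≤ c) (hcn : c - 2 ≤ n - s) (hk : 3 ≤ k) (hn : 19 ≤ n) :
    (((s : ℝ) / ((n : ℝ) - s + 1)) *
        (((n : ℝ) - s + 1) / ((n : ℝ) - s)) ^ (c - 2)) ^ (k - 1) ≤ 1 / 8 := by
  set m : ℝ := (n : ℝ) - s with hm
  have hs1 : (1 : ℝ) ≤ (s : ℝ) := by exact_mod_cast hs
  have h9 : 9 * (s : ℝ) ≤ m := by
    have : (10 * s : ℝ) ≤ (n : ℝ) := by exact_mod_cast hsn
    simp only [hm]; linarith
  have hmpos : 0 < m := by linarith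
  have hcm : ((c - 2 : ℕ) : ℝ) ≤ m := by
    have h1 : ((c - 2 : ℕ) : ℝ) ≤ ((n - s : ℕ) : ℝ) := by exact_mod_cast hcn
    have h2 : ((n - s : ℕ) : ℝ) = m := by
      have : s ≤ n := by omega
      simp [hm, Nat.cast_sub this]
    linarith
  -- bound the geometric factor
  have hpow3 : ((m + 1) / m) ^ (c - 2) ≤ 3 := by
    have h1 : (m + 1) / m = 1 + 1 / m := by field_simp
    have h2 : (1 : ℝ) + 1 / m ≤ Real.exp (1 / m) := by
      have := Real.add_one_le_exp (1 / m); linarith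
    calc ((m + 1) / m) ^ (c - 2) ≤ Real.exp (1 / m) ^ (c - 2) := by
          rw [h1]
          exact pow_le_pow_left₀ (by positivity) h2 _
      _ = Real.exp ((c - 2 : ℕ) * (1 / m)) := by rw [← Real.exp_nat_mul]
      _ ≤ Real.exp 1 := by
          apply Real.exp_le_exp.2
          rw [mul_one_div, div_le_one hmpos]
          exact hcm
      _ ≤ 3 := by
          have := Real.exp_one_lt_d9
          linarith
  have hfrac : (s : ℝ) / (m + 1) ≤ 1 / 9 := by
    rw [div_le_div_iff₀ (by linarith) (by norm_num)]
    linarith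
  have hbase_nonneg : 0 ≤ ((s : ℝ) / (m + 1)) * ((m + 1) / m) ^ (c - 2) := by
    positivity
  have hbase : ((s : ℝ) / (m + 1)) * ((m + 1) / m) ^ (c - 2) ≤ 1 / 3 := by
    calc ((s : ℝ) / (m + 1)) * ((m + 1) / m) ^ (c - 2)
        ≤ (1 / 9) * 3 := by
          apply mul_le_mul hfrac hpow3 (by positivity) (by norm_num)
      _ = 1 / 3 := by norm_num
  calc (((s : ℝ) / (m + 1)) * ((m + 1) / m) ^ (c - 2)) ^ (k - 1)
      ≤ (((s : ℝ) / (m + 1)) * ((m + 1) / m) ^ (c - 2)) ^ 2 :=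
        pow_le_pow_of_le_one hbase_nonneg (by linarith) (by omega)
    _ ≤ (1 / 3 : ℝ) ^ 2 := pow_le_pow_left₀ hbase_nonneg hbase 2
    _ ≤ 1 / 8 := by norm_num
end

section
/- Let p(n,c) denote the probability that a multigraph from the unconditioned permutation model R*(n,2k) has exactly c connected components. Then for c ≥ 2, p(n,c) = (1/c)·sum over s from 1 to n−c+1 of binom(n,s)^(1−k)·p(s,1)·p(n−s,c−1). -/
open scoped Classical

/-- The number of connected components of the multigraph on vertex set `Fin n` from the
unconditioned permutation model `R*(n, 2k)` generated by the permutations `π i`: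
vertices `a` and `b` are joined by an edge iff `π i a = b` for some `i`. -/
noncomputable def numComponents {n : ℕ} (k : ℕ) (π : Fin k → Equiv.Perm (Fin n)) : ℕ :=
  Nat.card (Quot (fun a b : Fin n => ∃ i, π i a = b))

/-- `p k n c` is the probability that a multigraph drawn from `R*(n, 2k)`
(i.e. generated by `k` independent uniform permutations of `[n]`) has exactly `c`
connected components. -/
noncomputable def pComp (k n c : ℕ) : ℝ :=
  ((Finset.univ.filter
      (fun π : Fin k → Equiv.Perm (Fin n) => numComponents k π = c)).card : ℝ) /
    (Fintype.card (Fin k → Equiv.Perm (Fin n)) : ℝ)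

/-!
Count the pairs `(π, S)` with `π` a `k`-tuple of permutations of `[n]` whose multigraph has `c`
components and `S` one of these components: each such `π` contributes `c` pairs. A component `S`
is invariant under every `π i`, so `π` splits into a tuple of permutations of `S` and one of its
complement; `S` is a component exactly when the first tuple is connected, and then the second has
`c - 1` components. Writing `N(n, c)` (`numWithComps`) for the number of tuples with `c`
components, this gives `c N(n, c) = ∑ₛ C(n, s) N(s, 1) N(n - s, c - 1)`, and dividing by
`n! ^ k = C(n, s) ^ k s! ^ k (n - s)! ^ k` gives the recursion. The terms with `s = 0` or
`s > n - c + 1` vanish because a graph on `m` vertices has at most `m` components.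
-/

open scoped Nat
open Equiv Finset

namespace PermGraph

variable {ι α β : Type*}

def Adj (π : ι → Perm α) (a b : α) : Prop := ∃ i, π i a = b

noncomputable def numComps (π : ι → Perm α) : ℕ := Nat.card (Quot (Adj π))

noncomputable def numWithComps (ι α : Type*) (c : ℕ) : ℕ :=
  Nat.card {π : ι → Perm α // numComps π = c}

theorem numComps_le_card [Finite α] (π : ι → Perm α) : numComps π ≤ Nat.card α :=
  Nat.card_le_card_of_surjective _ Quot.mk_surjective

theorem numWithComps_eq_zero [Finite α] {c : ℕ} (h : Nat.card α < c) :
    numWithComps ι α c = 0 := by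
  have : IsEmpty {π : ι → Perm α // numComps π = c} :=
    ⟨fun π => by have := numComps_le_card π.1; have := π.2; omega⟩
  exact Nat.card_of_isEmpty

def quotPermCongr (e : α ≃ β) (π : ι → Perm α) :
    Quot (Adj π) ≃ Quot (Adj fun i => e.permCongr (π i)) :=
  Quot.congr e fun a b => by simp [Adj, permCongr_apply]

theorem numComps_permCongr (e : α ≃ β) (π : ι → Perm α) :
    numComps (fun i => e.permCongr (π i)) = numComps π :=
  (Nat.card_congr (quotPermCongr e π)).symm

theorem numWithComps_congr (e : α ≃ β) (c : ℕ) :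
    numWithComps ι α c = numWithComps ι β c :=
  Nat.card_congr <| (piCongrRight fun _ => e.permCongr).subtypeEquiv fun π => by
    rw [← numComps_permCongr e π]; rfl

def quotSumCongr (σ : ι → Perm α) (τ : ι → Perm β) :
    Quot (Adj fun i => (σ i).sumCongr (τ i)) ≃ Quot (Adj σ) ⊕ Quot (Adj τ) where
  toFun := Quot.lift (Sum.map (Quot.mk _) (Quot.mk _)) <| by
    rintro (a | a) (b | b) ⟨i, h⟩ <;> simp only [Perm.sumCongr_apply, Sum.map_inl, Sum.map_inr,
      Sum.inl.injEq, Sum.inr.injEq, reduceCtorEq] at h ⊢ <;> exact Quot.sound ⟨i, h⟩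
  invFun := Sum.elim (Quot.map Sum.inl fun _ _ ⟨i, h⟩ => ⟨i, by simp [h]⟩)
    (Quot.map Sum.inr fun _ _ ⟨i, h⟩ => ⟨i, by simp [h]⟩)
  left_inv := by rintro ⟨a | a⟩ <;> rfl
  right_inv := by rintro (q | q) <;> induction q using Quot.ind <;> rfl

section SubtypeCongr

variable {p : α → Prop} [DecidablePred p]

def subtypeCongr (x : (ι → Perm {a // p a}) × (ι → Perm {a // ¬p a})) : ι → Perm α :=
  fun i => (x.1 i).subtypeCongr (x.2 i)

theorem subtypeCongr_injective : Function.Injective (subtypeCongr (ι := ι) (p := p)) := by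
  rintro ⟨σ, τ⟩ ⟨σ', τ'⟩ h
  have h' i := Perm.subtypeCongrHom_injective p (a₁ := (σ i, τ i)) (a₂ := (σ' i, τ' i))
    (congrFun h i)
  simp only [Prod.mk.injEq] at h' ⊢
  exact ⟨funext fun i => (h' i).1, funext fun i => (h' i).2⟩

def quotSubtypeCongr (x : (ι → Perm {a // p a}) × (ι → Perm {a // ¬p a})) :
    Quot (Adj (subtypeCongr x)) ≃ Quot (Adj x.1) ⊕ Quot (Adj x.2) :=
  (quotPermCongr (sumCompl p) fun i => (x.1 i).sumCongr (x.2 i)).symm.trans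
    (quotSumCongr x.1 x.2)

variable (x : (ι → Perm {a // p a}) × (ι → Perm {a // ¬p a})) {a : α}

theorem quotSubtypeCongr_mk_of_pos (h : p a) :
    quotSubtypeCongr x (Quot.mk _ a) = .inl (Quot.mk _ ⟨a, h⟩) := by
  have : (quotPermCongr (sumCompl p) fun i => (x.1 i).sumCongr (x.2 i)).symm (Quot.mk _ a) =
      Quot.mk _ (.inl ⟨a, h⟩) := (symm_apply_eq _).mpr rfl
  exact congrArg (quotSumCongr x.1 x.2) this

theorem quotSubtypeCongr_mk_of_neg (h : ¬p a) :
    quotSubtypeCongr x (Quot.mk _ a) = .inr (Quot.mk _ ⟨a, h⟩) := by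
  have : (quotPermCongr (sumCompl p) fun i => (x.1 i).sumCongr (x.2 i)).symm (Quot.mk _ a) =
      Quot.mk _ (.inr ⟨a, h⟩) := (symm_apply_eq _).mpr rfl
  exact congrArg (quotSumCongr x.1 x.2) this

theorem numComps_subtypeCongr [Finite α] :
    numComps (subtypeCongr x) = numComps x.1 + numComps x.2 := by
  rw [numComps, Nat.card_congr (quotSubtypeCongr x), Nat.card_sum, numComps, numComps]

end SubtypeCongr

section Components

variable [Fintype α]

noncomputable def component (π : ι → Perm α) (q : Quot (Adj π)) : Finset α :=
  {a | Quot.mk _ a = q}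

theorem mem_component {π : ι → Perm α} {q : Quot (Adj π)} {a : α} :
    a ∈ component π q ↔ Quot.mk _ a = q := by
  simp [component]

theorem component_injective (π : ι → Perm α) : Function.Injective (component π) := by
  intro q q' h
  obtain ⟨a, rfl⟩ := Quot.mk_surjective q
  exact mem_component.mp (h ▸ mem_component.mpr rfl)

theorem card_range_component (π : ι → Perm α) :
    Nat.card (Set.range (component π)) = numComps π :=
  Nat.card_range_of_injective (component_injective π)

theorem exists_subtypeCongr_eq {π : ι → Perm α} {S : Finset α}
    (hS : S ∈ Set.range (component π)) : ∃ x, subtypeCongr (p := (· ∈ S)) x = π := by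
  obtain ⟨q, rfl⟩ := hS
  have hinv (i : ι) (a : α) : π i a ∈ component π q ↔ a ∈ component π q := by
    rw [mem_component, mem_component, ← Quot.sound (r := Adj π) ⟨i, rfl⟩]
  refine ⟨(fun i => (π i).subtypePerm (hinv i),
    fun i => (π i).subtypePerm (not_congr <| hinv i ·)), funext fun i => Equiv.ext fun a => ?_⟩
  by_cases ha : a ∈ component π q <;> simp [subtypeCongr, ha]

theorem mem_range_component_subtypeCongr_iff {S : Finset α}
    (x : (ι → Perm {a // a ∈ S}) × (ι → Perm {a // a ∉ S})) :
    S ∈ Set.range (component (subtypeCongr x)) ↔ numComps x.1 = 1 := by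
  rw [numComps, Nat.card_eq_one_iff_unique]
  constructor
  · rintro ⟨q, hq⟩
    obtain ⟨a, rfl⟩ := Quot.mk_surjective q
    have ha : a ∈ S := hq ▸ mem_component.mpr rfl
    have hS (b : {a // a ∈ S}) : Quot.mk (Adj x.1) b = Quot.mk _ ⟨a, ha⟩ := by
      have := congrArg (quotSubtypeCongr x) (mem_component.mp (by rw [hq]; exact b.2))
      rwa [quotSubtypeCongr_mk_of_pos x b.2, quotSubtypeCongr_mk_of_pos x ha,
        Sum.inl.injEq] at this
    refine ⟨⟨fun q₁ q₂ => ?_⟩, ⟨Quot.mk _ ⟨a, ha⟩⟩⟩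
    induction q₁ using Quot.ind
    induction q₂ using Quot.ind
    exact (hS _).trans (hS _).symm
  · rintro ⟨hsub, ⟨q⟩⟩
    obtain ⟨⟨a, ha⟩, -⟩ := Quot.mk_surjective q
    refine ⟨Quot.mk _ a, Finset.ext fun b => ?_⟩
    rw [mem_component, ← (quotSubtypeCongr x).injective.eq_iff, quotSubtypeCongr_mk_of_pos x ha]
    by_cases hb : b ∈ S
    · simpa [quotSubtypeCongr_mk_of_pos x hb, hb] using Subsingleton.elim _ _
    · simp [quotSubtypeCongr_mk_of_neg x hb, hb]

theorem card_numComps_eq_and_mem_range_component {c : ℕ} (hc : 1 ≤ c) (S : Finset α) :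
    Nat.card {π : ι → Perm α // numComps π = c ∧ S ∈ Set.range (component π)} =
      numWithComps ι {a // a ∈ S} 1 * numWithComps ι {a // a ∉ S} (c - 1) := by
  have hset : {π : ι → Perm α | numComps π = c ∧ S ∈ Set.range (component π)} =
      subtypeCongr (p := (· ∈ S)) '' {x | numComps x.1 = 1 ∧ numComps x.2 = c - 1} := by
    ext π
    constructor
    · rintro ⟨hπ, hS⟩
      obtain ⟨x, rfl⟩ := exists_subtypeCongr_eq hS
      rw [mem_range_component_subtypeCongr_iff] at hS
      rw [numComps_subtypeCongr] at hπ
      exact ⟨x, ⟨hS, by omega⟩, rfl⟩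
    · rintro ⟨x, ⟨h1, h2⟩, rfl⟩
      refine ⟨?_, (mem_range_component_subtypeCongr_iff x).mpr h1⟩
      rw [numComps_subtypeCongr]
      omega
  rw [numWithComps, numWithComps, ← Nat.card_prod, ← Nat.card_congr subtypeProdEquivProd]
  exact (congrArg (fun s : Set _ => Nat.card s) hset).trans
    (Nat.card_image_of_injective subtypeCongr_injective _)

end Components

theorem mul_numWithComps_eq_sum [Finite ι] [Fintype α] (c : ℕ) :
    c * numWithComps ι α c = ∑ S : Finset α,
      Nat.card {π : ι → Perm α // numComps π = c ∧ S ∈ Set.range (component π)} := by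
  classical
  have := Fintype.ofFinite ι
  have hcard (P : (ι → Perm α) → Prop) : Nat.card {x // P x} = #{x | P x} := by
    rw [Nat.card_eq_fintype_card, Fintype.card_subtype]
  have h := sum_card_bipartiteAbove_eq_sum_card_bipartiteBelow
    (s := univ.filter fun π : ι → Perm α => numComps π = c) (t := univ)
    (r := fun π S => S ∈ Set.range (component π))
  simp only [bipartiteAbove, bipartiteBelow, filter_filter] at h
  rw [numWithComps, hcard, mul_comm, ← smul_eq_mul, ← sum_const]
  simp only [hcard]
  convert (sum_congr rfl fun π hπ => ?_).trans h
  rw [← (mem_filter.mp hπ).2, ← card_range_component π, Nat.card_eq_fintype_card,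
    Fintype.card_subtype]

theorem mul_numWithComps_fin [Finite ι] {n c : ℕ} (hc : 1 ≤ c) :
    c * numWithComps ι (Fin n) c = ∑ s ∈ range (n + 1),
      n.choose s * (numWithComps ι (Fin s) 1 * numWithComps ι (Fin (n - s)) (c - 1)) := by
  have hS (S : Finset (Fin n)) :
      Nat.card {π : ι → Perm (Fin n) // numComps π = c ∧ S ∈ Set.range (component π)} =
        numWithComps ι (Fin #S) 1 * numWithComps ι (Fin (n - #S)) (c - 1) := by
    have hcompl : Fintype.card {a // a ∉ S} = n - #S := by
      rw [Fintype.card_subtype_compl, Fintype.card_coe, Fintype.card_fin]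
    rw [card_numComps_eq_and_mem_range_component hc, numWithComps_congr S.equivFin,
      numWithComps_congr (Fintype.equivFinOfCardEq hcompl)]
  rw [mul_numWithComps_eq_sum, ← powerset_univ, sum_congr rfl fun S _ => hS S,
    sum_powerset_apply_card (f := fun s =>
      numWithComps ι (Fin s) 1 * numWithComps ι (Fin (n - s)) (c - 1)),
    card_univ, Fintype.card_fin]
  rfl

theorem mul_numWithComps_fin_eq_sum_Icc [Finite ι] {n c : ℕ} (hn : 1 ≤ n) (hc : 2 ≤ c) :
    c * numWithComps ι (Fin n) c = ∑ s ∈ Icc 1 (n - c + 1),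
      n.choose s * (numWithComps ι (Fin s) 1 * numWithComps ι (Fin (n - s)) (c - 1)) := by
  rw [mul_numWithComps_fin (by omega)]
  refine (sum_subset (fun s hs => ?_) fun s _ hs => ?_).symm
  · rw [mem_Icc] at hs
    rw [mem_range]
    omega
  · rw [mem_Icc, not_and_or, not_le, not_le] at hs
    rcases hs with hs | hs
    · rw [Nat.lt_one_iff.mp hs, numWithComps_eq_zero (by simp), zero_mul, mul_zero]
    · rw [numWithComps_eq_zero (α := Fin (n - s)) (by simp; omega), mul_zero, mul_zero]

end PermGraph

open PermGraph

theorem pComp_eq_numWithComps_div (k n c : ℕ) :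
    pComp k n c = numWithComps (Fin k) (Fin n) c / (n ! : ℝ) ^ k := by
  rw [pComp, numWithComps, Nat.card_eq_fintype_card, Fintype.card_subtype, Fintype.card_fun,
    Fintype.card_perm, Fintype.card_fin, Fintype.card_fin]
  push_cast
  rfl

theorem choose_zpow_one_sub_mul_div_mul_div {n s : ℕ} (hs : s ≤ n) (k : ℕ) (x y : ℝ) :
    (n.choose s : ℝ) ^ ((1 : ℤ) - k) * (x / (s ! : ℝ) ^ k) * (y / ((n - s)! : ℝ) ^ k) =
      n.choose s * (x * y) / (n ! : ℝ) ^ k := by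
  have hch : (n.choose s : ℝ) ≠ 0 := by exact_mod_cast (Nat.choose_pos hs).ne'
  rw [← Nat.choose_mul_factorial_mul_factorial hs, zpow_sub₀ hch, zpow_one, zpow_natCast]
  push_cast
  field_simp
  ring

theorem stmt11_general (k n c : ℕ) (hn : 1 ≤ n) (hc : 2 ≤ c) :
    pComp k n c = (1 / (c : ℝ)) *
      ∑ s ∈ Finset.Icc 1 (n - c + 1),
        ((n.choose s : ℝ)) ^ ((1 : ℤ) - (k : ℤ)) * pComp k s 1 * pComp k (n - s) (c - 1) := by
  have hc0 : (c : ℝ) ≠ 0 := by exact_mod_cast (by omega : c ≠ 0)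
  have hrec := congrArg (Nat.cast (R := ℝ)) (mul_numWithComps_fin_eq_sum_Icc (ι := Fin k) hn hc)
  push_cast at hrec
  calc pComp k n c = 1 / c * (c * numWithComps (Fin k) (Fin n) c / (n ! : ℝ) ^ k) := by
        rw [pComp_eq_numWithComps_div]; field_simp
    _ = _ := by
        rw [hrec, sum_div]
        refine congrArg _ (sum_congr rfl fun s hs => ?_)
        rw [mem_Icc] at hs
        rw [pComp_eq_numWithComps_div, pComp_eq_numWithComps_div,
          choose_zpow_one_sub_mul_div_mul_div (by omega)]

/-- Recursion for the component-count distribution of `R*(n, 2k)`: for `c ≥ 2`,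
`p(n,c) = (1/c) · ∑_{s=1}^{n-c+1} C(n,s)^(1-k) · p(s,1) · p(n-s, c-1)`. -/
theorem stmt11 (k n c : ℕ) (hk : 1 ≤ k) (hn : 1 ≤ n) (hc : 2 ≤ c) :
    pComp k n c = (1 / (c : ℝ)) *
      ∑ s ∈ Finset.Icc 1 (n - c + 1),
        ((n.choose s : ℝ)) ^ ((1 : ℤ) - (k : ℤ)) * pComp k s 1 * pComp k (n - s) (c - 1) :=
  stmt11_general k n c hn hc
end

section
/- For integers n ≥ 19, c with 3 ≤ c ≤ n/4, and k ≥ 3, the quantity ((e^2/sqrt(2π))·(c−1)^{3/2}·(1 − (c−1)/n)^{n−c+3/2})^{k−1} is maximized over c at c = 3. -/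
open Real

lemma my_log_le {x : ℝ} (h : x < 1) : Real.log (1 - x) ≤ -x := by
  have := Real.log_le_sub_one_of_pos (by linarith : (0:ℝ) < 1 - x)
  linarith

lemma my_log_ge {x : ℝ} (h : x < 1) : -x / (1 - x) ≤ Real.log (1 - x) := by
  have hx : (0:ℝ) < 1 - x := by linarith
  have h2 := Real.log_le_sub_one_of_pos (inv_pos.mpr hx)
  rw [Real.log_inv] at h2
  have e : -x/(1-x) = 1 - (1-x)⁻¹ := by field_simp; ring
  linarith

-- c = 4 case
lemma case4 {n : ℝ} (hn : 19 ≤ n) :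
    3/2 * Real.log 3 + (n - 4 + 3/2) * Real.log (1 - 3/n)
    ≤ 3/2 * Real.log 2 + (n - 3 + 3/2) * Real.log (1 - 2/n) := by
  have hn0 : (0:ℝ) < n := by linarith
  have hd : (0:ℝ) < n - 2 := by linarith
  have h2n : 2/n < 1 := by rw [div_lt_one hn0]; linarith
  have h1d : 1/(n-2) < 1 := by rw [div_lt_one hd]; linarith
  have hp1 : (0:ℝ) < 1 - 2/n := by linarith
  have hp2 : (0:ℝ) < 1 - 1/(n-2) := by linarith
  have hfac : (1 - 2/n) * (1 - 1/(n-2)) = 1 - 3/n := by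
    field_simp
    ring
  have hsplit : Real.log (1 - 3/n) = Real.log (1 - 2/n) + Real.log (1 - 1/(n-2)) := by
    rw [← hfac, Real.log_mul hp1.ne' hp2.ne']
  rw [hsplit]
  have hlog32 : Real.log 3 - Real.log 2 ≤ 1/2 := by
    have := Real.log_le_sub_one_of_pos (by norm_num : (0:ℝ) < 3/2)
    rw [Real.log_div (by norm_num) (by norm_num)] at this
    linarith
  have hA : Real.log (1 - 1/(n-2)) ≤ -(1/(n-2)) := my_log_le h1d
  have hcoef : (0:ℝ) ≤ n - 4 + 3/2 := by linarith
  have hA' : (n - 4 + 3/2) * Real.log (1 - 1/(n-2)) ≤ (n - 4 + 3/2) * (-(1/(n-2))) :=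
    mul_le_mul_of_nonneg_left hA hcoef
  have hB : -(2/n)/(1 - 2/n) ≤ Real.log (1 - 2/n) := my_log_ge h2n
  have hBeq : -(2/n)/(1 - 2/n) = -(2/(n-2)) := by
    field_simp
  rw [hBeq] at hB
  have harith : 3/4 + (n - 4 + 3/2) * (-(1/(n-2))) ≤ -(2/(n-2)) := by
    have key : -(2/(n-2)) - (3/4 + (n - 4 + 3/2) * (-(1/(n-2)))) = (n/4 - 3)/(n-2) := by
      field_simp
      ring
    have hpos : (0:ℝ) ≤ (n/4 - 3)/(n-2) := div_nonneg (by linarith) (by linarith)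
    linarith
  have e1 : (n - 4 + 3/2) * (Real.log (1 - 2/n) + Real.log (1 - 1/(n-2)))
      = (n - 4 + 3/2) * Real.log (1 - 2/n) + (n - 4 + 3/2) * Real.log (1 - 1/(n-2)) := by ring
  have e2 : (n - 3 + 3/2) * Real.log (1 - 2/n)
      = (n - 4 + 3/2) * Real.log (1 - 2/n) + Real.log (1 - 2/n) := by ring
  rw [e1, e2]
  linarith

-- c ≥ 5 case, with m = c - 1 ≥ 4
lemma case5 {m n : ℝ} (hm : 4 ≤ m) (hn : 4*(m+1) ≤ n) :
    3/2 * Real.log m + (n - (m+1) + 3/2) * Real.log (1 - m/n)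
    ≤ 3/2 * Real.log 2 + (n - 3 + 3/2) * Real.log (1 - 2/n) := by
  have hn20 : (20:ℝ) ≤ n := by linarith
  have hn0 : (0:ℝ) < n := by linarith
  have hd : (0:ℝ) < n - 2 := by linarith
  have hmn : m/n < 1 := by rw [div_lt_one hn0]; linarith
  have h2n : 2/n < 1 := by rw [div_lt_one hn0]; linarith
  -- upper bound for LHS log term
  have hcoef : (0:ℝ) ≤ n - (m+1) + 3/2 := by linarith
  have t1 : (n - (m+1) + 3/2) * Real.log (1 - m/n) ≤ (n - (m+1) + 3/2) * (-(m/n)) :=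
    mul_le_mul_of_nonneg_left (my_log_le hmn) hcoef
  have t2 : (n - (m+1) + 3/2) * (-(m/n)) = -m + m*(m - 1/2)/n := by
    field_simp
    ring
  have t3 : m*(m - 1/2)/n ≤ (m - 1/2)/4 := by
    rw [div_le_div_iff₀ hn0 (by norm_num : (0:ℝ) < 4)]
    nlinarith
  -- log m ≤ m/4 - 1 + 2 log 2
  have hlog4 : Real.log 4 = 2 * Real.log 2 := by
    rw [show (4:ℝ) = 2^2 by norm_num, Real.log_pow]
    push_cast; ring
  have t4 : Real.log m ≤ m/4 - 1 + 2 * Real.log 2 := by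
    have h := Real.log_le_sub_one_of_pos (by linarith : (0:ℝ) < m/4)
    rw [Real.log_div (by linarith) (by norm_num), hlog4] at h
    linarith
  -- lower bound for RHS log term
  have t5 : (n - 3 + 3/2) * (-(2/n)/(1 - 2/n)) ≤ (n - 3 + 3/2) * Real.log (1 - 2/n) :=
    mul_le_mul_of_nonneg_left (my_log_ge h2n) (by linarith)
  have t6 : (n - 3 + 3/2) * (-(2/n)/(1 - 2/n)) = -2 - 1/(n-2) := by
    field_simp
    ring
  have t7 : 1/(n-2) ≤ 1/18 := by
    rw [div_le_div_iff₀ hd (by norm_num : (0:ℝ) < 18)]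
    linarith
  rw [t6] at t5
  have hl2 : Real.log 2 < 0.6931471808 := Real.log_two_lt_d9
  linarith

lemma bridge {m n e1 : ℝ} (hm : 0 < m) (h1 : 0 < 1 - m/n) (h2 : 0 < 1 - 2/n)
    (h : 3/2 * Real.log m + e1 * Real.log (1 - m/n)
      ≤ 3/2 * Real.log 2 + (n - 3 + 3/2) * Real.log (1 - 2/n)) :
    m ^ ((3:ℝ)/2) * (1 - m/n) ^ e1 ≤ (2:ℝ) ^ ((3:ℝ)/2) * (1 - 2/n) ^ (n - 3 + 3/2) := by
  have hL : (0:ℝ) < m ^ ((3:ℝ)/2) * (1 - m/n) ^ e1 := by positivity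
  have hR : (0:ℝ) < (2:ℝ) ^ ((3:ℝ)/2) * (1 - 2/n) ^ (n - 3 + 3/2) := by positivity
  rw [← Real.log_le_log_iff hL hR,
    Real.log_mul (by positivity) (by positivity),
    Real.log_mul (by positivity) (by positivity),
    Real.log_rpow hm, Real.log_rpow h1, Real.log_rpow (by norm_num : (0:ℝ) < 2),
    Real.log_rpow h2]
  exact h

/-- For integers `n ≥ 19`, `k ≥ 3` and `3 ≤ c ≤ n/4`, the quantity
`((e²/√(2π)) · (c−1)^(3/2) · (1 − (c−1)/n)^(n−c+3/2))^(k−1)` is maximized at `c = 3`. -/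
theorem stmt17 (n c k : ℕ) (hn : 19 ≤ n) (hk : 3 ≤ k) (hc : 3 ≤ c) (hcn : 4 * c ≤ n) :
    (Real.exp 1 ^ 2 / Real.sqrt (2 * π) * ((c : ℝ) - 1) ^ ((3 : ℝ) / 2) *
        (1 - ((c : ℝ) - 1) / n) ^ ((n : ℝ) - c + 3 / 2)) ^ (k - 1)
    ≤ (Real.exp 1 ^ 2 / Real.sqrt (2 * π) * ((3 : ℝ) - 1) ^ ((3 : ℝ) / 2) *
        (1 - ((3 : ℝ) - 1) / n) ^ ((n : ℝ) - 3 + 3 / 2)) ^ (k - 1) := by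

  have hnR : (19:ℝ) ≤ (n:ℝ) := by exact_mod_cast hn
  have hcR : (3:ℝ) ≤ (c:ℝ) := by exact_mod_cast hc
  have hcnR : 4 * (c:ℝ) ≤ (n:ℝ) := by exact_mod_cast hcn
  have hn0 : (0:ℝ) < n := by linarith
  have hm0 : (0:ℝ) < (c:ℝ) - 1 := by linarith
  have h1 : (0:ℝ) < 1 - ((c:ℝ) - 1)/n := by
    have : ((c:ℝ) - 1)/n < 1 := by rw [div_lt_one hn0]; linarith
    linarith
  have h2 : (0:ℝ) < 1 - 2/(n:ℝ) := by
    have : (2:ℝ)/n < 1 := by rw [div_lt_one hn0]; linarith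
    linarith
  have key : ((c:ℝ) - 1) ^ ((3:ℝ)/2) * (1 - ((c:ℝ) - 1)/n) ^ ((n:ℝ) - c + 3/2)
      ≤ (2:ℝ) ^ ((3:ℝ)/2) * (1 - 2/(n:ℝ)) ^ ((n:ℝ) - 3 + 3/2) := by
    apply bridge hm0 h1 h2
    rcases lt_or_ge c 5 with hc5 | hc5
    · interval_cases c
      · norm_num
      · have := case4 hnR
        norm_num at this ⊢
        convert this using 2 <;> ring
    · have hm4 : (4:ℝ) ≤ (c:ℝ) - 1 := by
        have : (5:ℝ) ≤ (c:ℝ) := by exact_mod_cast hc5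
        linarith
      have hmn : 4 * (((c:ℝ) - 1) + 1) ≤ (n:ℝ) := by linarith
      have := case5 hm4 hmn
      convert this using 3
      ring
  have hA : (0:ℝ) ≤ Real.exp 1 ^ 2 / Real.sqrt (2 * π) := by positivity
  have h32 : ((3:ℝ) - 1) = 2 := by norm_num
  rw [h32]
  apply pow_le_pow_left₀
  · positivity
  · rw [mul_assoc, mul_assoc]
    exact mul_le_mul_of_nonneg_left key hA
end
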